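/- Let A be a commutative ring, f₀,…,f_r ∈ A, and S = ⊕_{d≥0} a^d the Rees algebra of the ideal a = (f₀,…,f_r). For each i, the degree-0 part of the homogeneous localization S_{(f_i)} has no f_i-torsion: multiplication by f_i is injective on S_{(f_i)}. -/

import Mathlib

/-- The natural grading of the Rees algebra `S = ⊕_{n≥0} 𝔞ⁿ tⁿ ⊆ A[t]`: the degree-`n`
piece consists of the monomials `a tⁿ` with `a ∈ 𝔞ⁿ`. -/
noncomputable def reesGrading {A : Type*} [CommRing A] (𝔞 : Ideal A) :
    ℕ → Submodule A ↥(reesAlgebra 𝔞) := fun n =>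
  Submodule.comap (reesAlgebra 𝔞).val.toLinearMap
    (Submodule.map (Polynomial.monomial n : A →ₗ[A] Polynomial A) (𝔞 ^ n))

/-- An element `g ∈ 𝔞` regarded as the degree-one element `g·t` of the Rees algebra. -/
noncomputable def reesDeg1 {A : Type*} [CommRing A] (𝔞 : Ideal A) (g : A) (hg : g ∈ 𝔞) :
    ↥(reesAlgebra 𝔞) :=
  ⟨Polynomial.monomial 1 g, reesAlgebra.monomial_mem.mpr (by simpa using hg)⟩

/-- An element `g ∈ A` regarded as a degree-zero element of the Rees algebra. -/
noncomputable def reesDeg0 {A : Type*} [CommRing A] (𝔞 : Ideal A) (g : A) :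
    ↥(reesGrading 𝔞 0) :=
  ⟨⟨Polynomial.monomial 0 g, reesAlgebra.monomial_mem.mpr (by simp)⟩,
    Submodule.mem_comap.mpr ⟨g, by simp, rfl⟩⟩


/-! If `g · u = 0` in `S[(g t)⁻¹]` with `u = s / (g t)ᵏ`, then `g · s' = 0` in `S` for some
`s' = (g t)ᵐ s`, and hence `(g t) · s' = t · (g s') = 0` in `A[t]`, so `u = 0`. Since `S_{(g t)}`
is a subring of `S[(g t)⁻¹]`, multiplication by `g` is injective there as well. -/

theorem IsLocalization.isLeftRegular_algebraMap {R : Type*} [CommRing R] {M : Submonoid R}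
    {S : Type*} [CommRing S] [Algebra R S] [IsLocalization M S] {y : R}
    (hy : ∀ s, y * s = 0 → ∃ m ∈ M, m * s = 0) :
    IsLeftRegular (algebraMap R S y) := by
  refine isLeftRegular_iff_right_eq_zero_of_mul.mpr fun u hu => ?_
  obtain ⟨s, d, rfl⟩ := IsLocalization.exists_mk'_eq M u
  rw [IsLocalization.mul_mk'_eq_mk'_of_mul, IsLocalization.mk'_eq_zero_iff] at hu
  obtain ⟨m, hm⟩ := hu
  obtain ⟨m', hm', hm's⟩ := hy (m * s) (by rw [← hm]; ring)
  rw [IsLocalization.mk'_eq_zero_iff]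
  exact ⟨⟨m' * m, M.mul_mem hm' m.2⟩, by rw [← hm's]; simp only [mul_assoc]⟩

theorem HomogeneousLocalization.isLeftRegular_algebraMap_of_val {ι A σ : Type*}
    [AddCommMonoid ι] [DecidableEq ι] [CommRing A] [SetLike σ A] [AddSubgroupClass σ A]
    {𝒜 : ι → σ} [GradedRing 𝒜] {x : Submonoid A} (a : 𝒜 0)
    (ha : IsLeftRegular (algebraMap A (Localization x) a)) :
    IsLeftRegular (algebraMap (𝒜 0) (HomogeneousLocalization 𝒜 x) a) := by
  intro s t hst
  apply HomogeneousLocalization.val_injective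
  apply ha
  have hst_val := congrArg HomogeneousLocalization.val hst
  simp only [HomogeneousLocalization.val_mul] at hst_val
  rwa [← HomogeneousLocalization.algebraMap_apply, ← IsScalarTower.algebraMap_apply] at hst_val

theorem reesDeg1_mul_eq_zero_of_reesDeg0_mul_eq_zero {A : Type*} [CommRing A] {𝔞 : Ideal A}
    {g : A} (hg : g ∈ 𝔞) {s : reesAlgebra 𝔞}
    (hgs : ((reesDeg0 𝔞 g : reesGrading 𝔞 0) : reesAlgebra 𝔞) * s = 0) :
    reesDeg1 𝔞 g hg * s = 0 := by
  have hpoly : Polynomial.C g * (s : Polynomial A) = 0 := congrArg Subtype.val hgs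
  apply Subtype.ext
  calc Polynomial.monomial 1 g * (s : Polynomial A)
        = Polynomial.X * (Polynomial.C g * (s : Polynomial A)) := by
        rw [← Polynomial.C_mul_X_eq_monomial]; ring
    _ = 0 := by rw [hpoly, mul_zero]

/-- For the Rees algebra `S = ⊕_{d≥0} 𝔞^d` of `𝔞 = (f₀, …, f_r)`, the degree-zero part
`S_{(f_i)}` of the homogeneous localization at the degree-one element `f_i t` has no
`f_i`-torsion: multiplication by `f_i` is injective on `S_{(f_i)}`. -/
theorem rees_homogeneousLocalization_away_no_torsion
    (A : Type*) [CommRing A] {r : ℕ} (f : Fin (r + 1) → A) (i : Fin (r + 1))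
    [GradedAlgebra (reesGrading (Ideal.span (Set.range f)))] :
    Function.Injective
      (fun s : HomogeneousLocalization.Away (reesGrading (Ideal.span (Set.range f)))
          (reesDeg1 (Ideal.span (Set.range f)) (f i) (Ideal.subset_span ⟨i, rfl⟩)) =>
        (algebraMap ↥(reesGrading (Ideal.span (Set.range f)) 0)
          (HomogeneousLocalization.Away (reesGrading (Ideal.span (Set.range f)))
            (reesDeg1 (Ideal.span (Set.range f)) (f i) (Ideal.subset_span ⟨i, rfl⟩))) :
          ↥(reesGrading (Ideal.span (Set.range f)) 0) →+*
            HomogeneousLocalization.Away (reesGrading (Ideal.span (Set.range f)))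
              (reesDeg1 (Ideal.span (Set.range f)) (f i) (Ideal.subset_span ⟨i, rfl⟩)))
          (reesDeg0 (Ideal.span (Set.range f)) (f i)) * s) :=
  HomogeneousLocalization.isLeftRegular_algebraMap_of_val _ <|
    IsLocalization.isLeftRegular_algebraMap fun _ hs =>
      ⟨_, Submonoid.mem_powers _, reesDeg1_mul_eq_zero_of_reesDeg0_mul_eq_zero _ hs⟩
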